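/- Let V₁,…,Vₙ be isometries with orthogonal ranges on K whose joint wandering subspace is cyclic, i.e., K = closure of span{V_α q : α ∈ 𝔽ₙ⁺, q ∈ range(I − ΣᵢVᵢVᵢ*)}. If E ⊆ K is any cyclic subspace (K = ⋁_{α} V_α E), then dim(range(I − ΣᵢVᵢVᵢ*)) ≤ dim E. -/

import Mathlib

/-!
The operator `Q = 1 - ∑ Vᵢ Vᵢ*` is self-adjoint and, since the `Vᵢ` are isometries with orthogonal
ranges, its range `L` lies in `⋂ ker Vᵢ*`. A vector `q ∈ L` orthogonal to `Q E` is fixed by `Q`,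
hence orthogonal to `E`, and it is orthogonal to every `Vᵢ K`; so it is orthogonal to all `V_α E`
and vanishes by cyclicity of `E`. Thus `Q E` is dense in `L`. If `E` is finite-dimensional, `Q E`
is closed and equals `L`. Otherwise the Banach space `E` has Hamel dimension at least `𝔠`, while
the separable space `K` has at most `𝔠` elements.
-/

open ContinuousLinearMap

/-- For a word `α` in the free semigroup on `n` generators, `wordProd V α` is the
corresponding product `V_{i₁} ∘ ⋯ ∘ V_{i_k}` (the empty word gives the identity). -/
noncomputable def wordProd {H : Type*} [NormedAddCommGroup H] [NormedSpace ℂ H]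
    {n : ℕ} (V : Fin n → H →L[ℂ] H) (α : List (Fin n)) : H →L[ℂ] H :=
  (α.map V).prod

/-- A closed subspace `M` is cyclic for `V₁,…,Vₙ` if the closed span of all `V_α M`
is the whole space. -/
def IsCyclicSubspace {H : Type*} [NormedAddCommGroup H] [InnerProductSpace ℂ H]
    {n : ℕ} (V : Fin n → H →L[ℂ] H) (M : Submodule ℂ H) : Prop :=
  (Submodule.span ℂ (⋃ α : List (Fin n), (wordProd V α) '' (M : Set H))).topologicalClosure = ⊤

open scoped InnerProductSpace

open Cardinal in
theorem Cardinal.mk_le_continuum_of_secondCountable (X : Type*) [TopologicalSpace X] [T0Space X]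
    [SecondCountableTopology X] : #X ≤ 𝔠 := by
  obtain ⟨B, hBc, -, hB⟩ := TopologicalSpace.exists_countable_basis X
  have hinj : Function.Injective fun x : X => {s : B | x ∈ (s : Set X)} := by
    intro x y hxy
    have hmem (s : Set X) (hs : s ∈ B) : x ∈ s ↔ y ∈ s := by
      simpa using congrArg (⟨s, hs⟩ ∈ ·) hxy
    exact Inseparable.eq <| hB.nhds_hasBasis.ext hB.nhds_hasBasis
      (fun s ⟨hsB, hs⟩ => ⟨s, ⟨hsB, (hmem s hsB).1 hs⟩, subset_rfl⟩)
      (fun s ⟨hsB, hs⟩ => ⟨s, ⟨hsB, (hmem s hsB).2 hs⟩, subset_rfl⟩)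
  have := hBc.to_subtype
  calc #X ≤ #(Set B) := mk_le_of_injective hinj
    _ = 2 ^ #B := mk_set
    _ ≤ 2 ^ ℵ₀ := power_le_power_left two_ne_zero mk_le_aleph0
    _ = 𝔠 := two_power_aleph0

theorem linearIndependent_fun_pow (𝕜 : Type*) [Field 𝕜] :
    LinearIndependent 𝕜 (fun (t : 𝕜) (m : ℕ) => t ^ m) :=
  (linearIndependent_monoidHom (Multiplicative ℕ) 𝕜).comp (powersHom 𝕜) (powersHom 𝕜).injective

section Orthonormal

variable {𝕜 E : Type*} [RCLike 𝕜] [NormedAddCommGroup E] [InnerProductSpace 𝕜 E]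

theorem Orthonormal.inner_right_tsum {ι : Type*} {v : ι → E} (hv : Orthonormal 𝕜 v)
    {l : ι → 𝕜} (hl : Summable fun j => l j • v j) (i : ι) :
    ⟪v i, ∑' j, l j • v j⟫_𝕜 = l i := by
  classical
  rw [← innerSL_apply_apply, (innerSL 𝕜 (v i)).map_tsum hl, tsum_eq_single i]
  · simp [hv.1 i]
  · intro j hji
    simp [hv.inner_eq_zero hji.symm]

theorem exists_orthonormal_nat_of_not_finiteDimensional (h : ¬FiniteDimensional 𝕜 E) :
    ∃ e : ℕ → E, Orthonormal 𝕜 e := by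
  let b := Module.Free.chooseBasis 𝕜 E
  have : Infinite (Module.Free.ChooseBasisIndex 𝕜 E) := by
    rw [← not_finite_iff_infinite]
    exact fun _ => h (.of_basis b)
  exact ⟨_, InnerProductSpace.gramSchmidtNormed_orthonormal
    (b.linearIndependent.comp _ (Infinite.natEmbedding _).injective)⟩

-- The vectors `∑ tᵐ eₘ`, `0 < t < 1`, are linearly independent: their coordinate sequences
-- are distinct characters of `ℕ`.
open Cardinal in
theorem continuum_le_rank_of_not_finiteDimensional [CompleteSpace E]
    (h : ¬FiniteDimensional 𝕜 E) : 𝔠 ≤ Module.rank 𝕜 E := by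
  obtain ⟨e, he⟩ := exists_orthonormal_nat_of_not_finiteDimensional h
  let c (t : Set.Ioo (0 : ℝ) 1) : 𝕜 := ((t : ℝ) : 𝕜)
  have hsum (t : Set.Ioo (0 : ℝ) 1) : Summable fun m : ℕ => c t ^ m • e m := by
    refine .of_norm ?_
    simpa [norm_smul, he.1, c, abs_of_pos t.2.1] using
      summable_geometric_of_lt_one t.2.1.le t.2.2
  let v (t : Set.Ioo (0 : ℝ) 1) : E := ∑' m, c t ^ m • e m
  have hcoeff : (LinearMap.pi fun m => innerₛₗ 𝕜 (e m)) ∘ v = (fun s (m : ℕ) => s ^ m) ∘ c := by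
    ext t m
    exact he.inner_right_tsum (hsum t) m
  have hc : Function.Injective c := fun s t hst =>
    Subtype.ext (RCLike.ofReal_injective hst)
  have hv : LinearIndependent 𝕜 v :=
    .of_comp _ (hcoeff ▸ (linearIndependent_fun_pow 𝕜).comp c hc)
  simpa [mk_Ioo_real] using hv.cardinal_lift_le_rank

end Orthonormal

theorem Submodule.eq_of_le_of_orthogonal_inf_eq_bot {𝕜 E : Type*} [RCLike 𝕜]
    [NormedAddCommGroup E] [InnerProductSpace 𝕜 E] {M L : Submodule 𝕜 E}
    [M.HasOrthogonalProjection] (hML : M ≤ L) (h : Mᗮ ⊓ L = ⊥) : M = L := by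
  simpa [h] using sup_orthogonal_inf_of_hasOrthogonalProjection hML

section Isometries

variable {H : Type*} [NormedAddCommGroup H] [InnerProductSpace ℂ H] [CompleteSpace H] {n : ℕ}
  (V : Fin n → H →L[ℂ] H)

noncomputable def wanderingProjection : H →L[ℂ] H := 1 - ∑ i, V i ∘L adjoint (V i)

theorem isSelfAdjoint_wanderingProjection : IsSelfAdjoint (wanderingProjection V) :=
  (IsSelfAdjoint.one _).sub (isSelfAdjoint_sum _ fun i _ => .mul_star_self (V i))

variable {V}

theorem adjoint_comp_wanderingProjection
    (hiso : ∀ i j : Fin n, adjoint (V i) ∘L V j = if i = j then 1 else 0) (i : Fin n) :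
    adjoint (V i) ∘L wanderingProjection V = 0 := by
  have hiso' (j : Fin n) : adjoint (V i) * V j = if i = j then 1 else 0 := hiso i j
  calc adjoint (V i) * (1 - ∑ j, V j * adjoint (V j))
      = adjoint (V i) - ∑ j, adjoint (V i) * V j * adjoint (V j) := by
        simp only [mul_sub, mul_one, Finset.mul_sum, mul_assoc]
    _ = 0 := by simp [hiso']

theorem wanderingProjection_apply_of_forall_adjoint_eq_zero {q : H}
    (hq : ∀ i, adjoint (V i) q = 0) : wanderingProjection V q = q := by
  simp [wanderingProjection, hq]

theorem IsCyclicSubspace.eq_zero_of_forall_adjoint_eq_zero {E : Submodule ℂ H}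
    (hE : IsCyclicSubspace V E) {q : H} (hq : ∀ i, adjoint (V i) q = 0)
    (hqE : ∀ x ∈ E, ⟪x, q⟫_ℂ = 0) : q = 0 := by
  let W := (ℂ ∙ q)ᗮ
  have hgen : (⋃ α : List (Fin n), (wordProd V α) '' (E : Set H)) ⊆ W := by
    rintro _ ⟨_, ⟨α, rfl⟩, x, hx, rfl⟩
    rw [SetLike.mem_coe, Submodule.mem_orthogonal_singleton_iff_inner_left]
    cases α with
    | nil => simpa [wordProd] using hqE x hx
    | cons i β =>
      simp [wordProd, ← adjoint_inner_right, hq]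
  have hW : ⊤ ≤ W := hE ▸ Submodule.topologicalClosure_minimal _ (Submodule.span_le.2 hgen)
    (Submodule.isClosed_orthogonal _)
  simpa using Submodule.mem_orthogonal_singleton_iff_inner_left.1 (hW (Submodule.mem_top (x := q)))

theorem orthogonal_map_wanderingProjection_inf_range_eq_bot
    (hiso : ∀ i j : Fin n, adjoint (V i) ∘L V j = if i = j then 1 else 0)
    {E : Submodule ℂ H} (hE : IsCyclicSubspace V E) :
    (E.map (wanderingProjection V).toLinearMap)ᗮ ⊓
      LinearMap.range (wanderingProjection V).toLinearMap = ⊥ := by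
  rw [Submodule.eq_bot_iff]
  rintro _ ⟨hqE, x, rfl⟩
  rw [coe_coe] at hqE ⊢
  have hq (i : Fin n) : adjoint (V i) (wanderingProjection V x) = 0 := by
    rw [← comp_apply, adjoint_comp_wanderingProjection hiso, zero_apply]
  refine hE.eq_zero_of_forall_adjoint_eq_zero hq fun e he => ?_
  rw [← wanderingProjection_apply_of_forall_adjoint_eq_zero hq,
    ← adjoint_inner_left, (isSelfAdjoint_wanderingProjection V).adjoint_eq]
  exact Submodule.inner_right_of_mem_orthogonal (Submodule.mem_map_of_mem he) hqE

end Isometries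

open Cardinal in
theorem wandering_subspace_minimal_cyclic_general
    {K : Type*} [NormedAddCommGroup K] [InnerProductSpace ℂ K] [CompleteSpace K]
    [TopologicalSpace.SeparableSpace K]
    {n : ℕ} (V : Fin n → K →L[ℂ] K)
    (hiso : ∀ i j : Fin n, adjoint (V i) ∘L V j = if i = j then 1 else 0)
    (E : Submodule ℂ K) [CompleteSpace E]
    (hE : IsCyclicSubspace V E) :
    Module.rank ℂ (LinearMap.range (1 - ∑ i, V i ∘L adjoint (V i)).toLinearMap)
      ≤ Module.rank ℂ E := by
  change Module.rank ℂ (LinearMap.range (wanderingProjection V).toLinearMap) ≤ _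
  by_cases hE_fin : FiniteDimensional ℂ E
  · have hmap := Submodule.eq_of_le_of_orthogonal_inf_eq_bot LinearMap.map_le_range
      (orthogonal_map_wanderingProjection_inf_range_eq_bot hiso hE)
    exact hmap ▸ rank_map_le _ _
  · calc _ ≤ #(LinearMap.range (wanderingProjection V).toLinearMap) := rank_le_card _ _
      _ ≤ 𝔠 := mk_le_continuum_of_secondCountable _
      _ ≤ Module.rank ℂ E := continuum_le_rank_of_not_finiteDimensional hE_fin

theorem wandering_subspace_minimal_cyclic
    {K : Type*} [NormedAddCommGroup K] [InnerProductSpace ℂ K] [CompleteSpace K]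
    [TopologicalSpace.SeparableSpace K]
    {n : ℕ} (V : Fin n → K →L[ℂ] K)
    (hiso : ∀ i j : Fin n, adjoint (V i) ∘L V j = if i = j then 1 else 0)
    (hwandering_cyclic :
      IsCyclicSubspace V (LinearMap.range (1 - ∑ i, V i ∘L adjoint (V i)).toLinearMap))
    (E : Submodule ℂ K) [CompleteSpace E]
    (hE : IsCyclicSubspace V E) :
    Module.rank ℂ (LinearMap.range (1 - ∑ i, V i ∘L adjoint (V i)).toLinearMap)
      ≤ Module.rank ℂ E :=
  wandering_subspace_minimal_cyclic_general V hiso E hE
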